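/- arXiv:1902.07635 — 3 statements merged into one kernel-verified Lean document; each statement's English description precedes it below -/
import Mathlib

section
/- Let n ≥ 1, let c ∈ ℝ, let K₁,…,Kₙ : ℝ² → ℝ be twice continuously differentiable with compact support, and let Q : (ℝ²)^n → ℝ be bounded, continuous, and translation-invariant. Then for every w ∈ ℝ² the following integration-by-parts identity holds: Σ_{i=1}^n ∫_{(ℝ²)^n} Q(z₁,…,zₙ) (L_c K_i)(w − z_i) ∏_{k≠i} K_k(w − z_k) dz₁ ⋯ dzₙ = c Σ_{i≠j} ∫_{(ℝ²)^n} Q(z₁,…,zₙ) (∂_x K_i)(w − z_i)(∂_x K_j)(w − z_j) ∏_{k∉{i,j}} K_k(w − z_k) dz₁ ⋯ dzₙ, where the second sum runs over all ordered pairs (i,j) with i ≠ j. -/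
open MeasureTheory Finset

/-- Partial derivative in the first ("time") coordinate of `ℝ × ℝ`. -/
noncomputable def pt (f : ℝ × ℝ → ℝ) (w : ℝ × ℝ) : ℝ := fderiv ℝ f w (1, 0)

/-- Partial derivative in the second ("space") coordinate of `ℝ × ℝ`. -/
noncomputable def px (f : ℝ × ℝ → ℝ) (w : ℝ × ℝ) : ℝ := fderiv ℝ f w (0, 1)

/-- The parabolic operator `L_c f = ∂_t f − c ∂_x² f`. -/
noncomputable def Lop (c : ℝ) (f : ℝ × ℝ → ℝ) : ℝ × ℝ → ℝ :=
  fun w => pt f w - c * px (px f) w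

/-! The integral `Φ x = ∫ Q z * ∏ₖ Kₖ (xₖ - zₖ) dz` is the convolution of `Q` with the product
kernel `y ↦ ∏ₖ Kₖ yₖ` on `(ℝ²)ⁿ`. Translation invariance of `Q` makes `Φ` constant along the
diagonal directions `(v, …, v)`, and differentiating the convolution there (the derivative falls on
the compactly supported kernel) gives `∑ᵢ ∫ Q ∂ᵥKᵢ ∏_{k≠i} Kₖ = 0` for every `v`. For `v = ∂_t`
this kills the time derivatives in `L_c`; for `v = ∂_x`, applied to the kernels with `Kⱼ` replaced
by `∂ₓKⱼ`, it turns `∫ Q ∂ₓ²Kⱼ ∏_{k≠j} Kₖ` into `-∑_{i≠j} ∫ Q ∂ₓKᵢ ∂ₓKⱼ ∏_{k∉{i,j}} Kₖ`. -/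

theorem hasCompactSupport_prod_eval {ι E : Type*} [Fintype ι] [TopologicalSpace E] [T2Space E]
    {f : ι → E → ℝ} (hf : ∀ k, HasCompactSupport (f k)) :
    HasCompactSupport fun y : ι → E => ∏ k, f k (y k) := by
  refine HasCompactSupport.intro (isCompact_univ_pi hf) fun y hy => ?_
  obtain ⟨k, hk⟩ : ∃ k, y k ∉ tsupport (f k) := by simpa [Set.mem_univ_pi] using hy
  exact prod_eq_zero (mem_univ k) (image_eq_zero_of_notMem_tsupport hk)

open scoped Convolution in
theorem integral_mul_fderiv_sub_apply_eq_zero_of_invariant {G : Type*} [NormedAddCommGroup G]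
    [NormedSpace ℝ G] [MeasurableSpace G] [BorelSpace G] {μ : Measure G} [SFinite μ]
    [μ.IsAddLeftInvariant] {f g : G → ℝ} (hf : LocallyIntegrable f μ)
    (hcg : HasCompactSupport g) (hg : ContDiff ℝ 1 g) {v : G}
    (hinv : ∀ (s : ℝ) (t : G), f (t + s • v) = f t) (x : G) :
    ∫ t, f t * fderiv ℝ g (x - t) v ∂μ = 0 := by
  set L := ContinuousLinearMap.mul ℝ ℝ
  have hconst : ∀ s : ℝ, (f ⋆[L, μ] g) (x + s • v) = (f ⋆[L, μ] g) x := by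
    intro s
    simp only [convolution_def]
    rw [← integral_add_left_eq_self _ (s • v)]
    congr 1 with t
    rw [add_comm (s • v) t, hinv, add_sub_add_right_eq_sub]
  have hline : HasDerivAt (fun s : ℝ => x + s • v) v 0 := by
    simpa using ((hasDerivAt_id (0 : ℝ)).smul_const v).const_add x
  have hderiv := ((hcg.hasFDerivAt_convolution_right L hf hg (x + (0 : ℝ) • v)).comp_hasDerivAt
    (0 : ℝ) hline)
  rw [zero_smul, add_zero] at hderiv
  have hzero : (f ⋆[L.precompR G, μ] fderiv ℝ g) x v = 0 := by
    refine hderiv.unique ?_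
    simp only [Function.comp_def, hconst]
    exact hasDerivAt_const _ _
  rw [convolution_precompR_apply L hf (hcg.fderiv ℝ) (hg.continuous_fderiv one_ne_zero),
    convolution_def] at hzero
  simpa [L] using hzero

section ProductKernel

variable {ι E : Type*} [Fintype ι] [NormedAddCommGroup E] [NormedSpace ℝ E]

theorem fderiv_prod_eval_apply_const [DecidableEq ι] {f : ι → E → ℝ}
    (hf : ∀ k, Differentiable ℝ (f k)) (y : ι → E) (v : E) :
    fderiv ℝ (fun y : ι → E => ∏ k, f k (y k)) y (fun _ => v)
      = ∑ i, fderiv ℝ (f i) (y i) v * ∏ k ∈ univ.erase i, f k (y k) := by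
  have h := HasFDerivAt.finsetProd (u := univ) (g := fun k (y : ι → E) => f k (y k))
    fun i _ => ((hf i) (y i)).hasFDerivAt.comp y (hasFDerivAt_apply i y)
  rw [h.fderiv]
  simp [mul_comm]

variable [FiniteDimensional ℝ E] [MeasureSpace E] [BorelSpace E]
  [(volume : Measure E).IsAddHaarMeasure]

theorem integrable_mul_prod_sub {Q : (ι → E) → ℝ} (hQ : Continuous Q) {g : ι → E → ℝ}
    (hg : ∀ k, Continuous (g k)) (hgs : ∀ k, HasCompactSupport (g k)) (w : E) :
    Integrable fun z : ι → E => Q z * ∏ k, g k (w - z k) := by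
  refine (hQ.mul (continuous_finsetProd _ fun k _ =>
    (hg k).comp (continuous_const.sub (continuous_apply k)))).integrable_of_hasCompactSupport ?_
  have hprod : HasCompactSupport fun z : ι → E => ∏ k, g k (w - z k) :=
    hasCompactSupport_prod_eval (f := fun k y => g k (w - y))
      fun k => (hgs k).comp_homeomorph (Homeomorph.subLeft w)
  exact hprod.mul_left (f := Q)

theorem integrable_mul_apply_sub_mul_prod_erase [DecidableEq ι] {Q : (ι → E) → ℝ}
    (hQ : Continuous Q) {g : ι → E → ℝ} (hg : ∀ k, Continuous (g k))
    (hgs : ∀ k, HasCompactSupport (g k)) {a : E → ℝ} (ha : Continuous a)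
    (has : HasCompactSupport a) (w : E) (i : ι) :
    Integrable fun z : ι → E => Q z * (a (w - z i) * ∏ k ∈ univ.erase i, g k (w - z k)) := by
  have h := integrable_mul_prod_sub hQ (g := Function.update g i a)
    (fun k => by rcases eq_or_ne k i with rfl | h <;> simp [*])
    (fun k => by rcases eq_or_ne k i with rfl | h <;> simp [*]) w
  refine h.congr (.of_forall fun z => ?_)
  dsimp only
  rw [← mul_prod_erase univ _ (mem_univ i), Function.update_self]
  congr 2
  exact prod_congr rfl fun k hk => by rw [Function.update_of_ne (ne_of_mem_erase hk)]

theorem sum_integral_mul_fderiv_mul_prod_erase_eq_zero [DecidableEq ι] {Q : (ι → E) → ℝ}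
    (hQ : Continuous Q) (hQinv : ∀ (h : E) (z : ι → E), Q (fun i => z i + h) = Q z)
    {f : ι → E → ℝ} (hf : ∀ k, ContDiff ℝ 1 (f k)) (hfs : ∀ k, HasCompactSupport (f k))
    (w v : E) :
    ∑ i, ∫ z : ι → E, Q z * (fderiv ℝ (f i) (w - z i) v * ∏ k ∈ univ.erase i, f k (w - z k))
      = 0 := by
  have key := integral_mul_fderiv_sub_apply_eq_zero_of_invariant
    (hQ.locallyIntegrable (μ := volume)) (hasCompactSupport_prod_eval hfs)
    (contDiff_prod fun k _ => (hf k).comp (contDiff_apply ℝ E k)) (v := fun _ => v)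
    (fun s t => hQinv (s • v) t) (fun _ => w)
  simp only [fderiv_prod_eval_apply_const (fun k => (hf k).differentiable one_ne_zero),
    Pi.sub_apply, mul_sum] at key
  rwa [integral_finsetSum _ fun i _ => integrable_mul_apply_sub_mul_prod_erase hQ
    (fun k => (hf k).continuous) hfs
    (((hf i).continuous_fderiv one_ne_zero).clm_apply continuous_const)
    ((hfs i).fderiv_apply ℝ v) w i] at key

theorem integral_mul_fderiv_fderiv_mul_prod_erase_eq_neg_sum [DecidableEq ι] {Q : (ι → E) → ℝ}
    (hQ : Continuous Q) (hQinv : ∀ (h : E) (z : ι → E), Q (fun i => z i + h) = Q z)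
    {K : ι → E → ℝ} (hK : ∀ k, ContDiff ℝ 2 (K k)) (hKs : ∀ k, HasCompactSupport (K k))
    (w v : E) (j : ι) :
    ∫ z : ι → E, Q z * (fderiv ℝ (fun y => fderiv ℝ (K j) y v) (w - z j) v
        * ∏ k ∈ univ.erase j, K k (w - z k))
      = -∑ i ∈ univ.erase j, ∫ z : ι → E, Q z * (fderiv ℝ (K i) (w - z i) v
        * fderiv ℝ (K j) (w - z j) v * ∏ k ∈ (univ.erase i).erase j, K k (w - z k)) := by
  set u := Function.update K j fun y => fderiv ℝ (K j) y v
  have hu_ne : ∀ k ≠ j, u k = K k := fun k hk => Function.update_of_ne hk _ K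
  have hu_prod : ∀ s : Finset ι, j ∉ s → ∀ z : ι → E,
      ∏ k ∈ s, u k (w - z k) = ∏ k ∈ s, K k (w - z k) := fun s hs z =>
    prod_congr rfl fun k hk => by rw [hu_ne k (ne_of_mem_of_not_mem hk hs)]
  have hu : ∀ k, ContDiff ℝ 1 (u k) ∧ HasCompactSupport (u k) := by
    intro k
    rcases eq_or_ne k j with rfl | hk
    · simp only [u, Function.update_self]
      exact ⟨((hK k).fderiv_right le_rfl).clm_apply contDiff_const, (hKs k).fderiv_apply ℝ v⟩
    · rw [hu_ne k hk]
      exact ⟨(hK k).of_le one_le_two, hKs k⟩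
  have h := sum_integral_mul_fderiv_mul_prod_erase_eq_zero hQ hQinv (fun k => (hu k).1)
    (fun k => (hu k).2) w v
  rw [← add_sum_erase _ _ (mem_univ j)] at h
  refine eq_neg_of_add_eq_zero_left (Eq.trans ?_ h)
  congr 1
  · simp only [u, Function.update_self, hu_prod _ (notMem_erase j univ)]
  · refine sum_congr rfl fun i hi => integral_congr_ae (.of_forall fun z => ?_)
    have hij := ne_of_mem_erase hi
    simp only [← mul_prod_erase _ _ (mem_erase.2 ⟨hij.symm, mem_univ j⟩),
      hu_prod _ (notMem_erase j _), hu_ne i hij, u, Function.update_self]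
    ring

end ProductKernel

theorem integral_mul_Lop_mul_prod_erase {n : ℕ} {K : Fin n → ℝ × ℝ → ℝ}
    (hK : ∀ i, ContDiff ℝ 2 (K i)) (hKsupp : ∀ i, HasCompactSupport (K i))
    {Q : (Fin n → ℝ × ℝ) → ℝ} (hQcont : Continuous Q) (c : ℝ) (w : ℝ × ℝ) (i : Fin n) :
    ∫ z : Fin n → ℝ × ℝ, Q z * (Lop c (K i) (w - z i) * ∏ k ∈ univ.erase i, K k (w - z k))
      = (∫ z : Fin n → ℝ × ℝ, Q z * (pt (K i) (w - z i) * ∏ k ∈ univ.erase i, K k (w - z k)))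
        - c * ∫ z : Fin n → ℝ × ℝ,
          Q z * (px (px (K i)) (w - z i) * ∏ k ∈ univ.erase i, K k (w - z k)) := by
  have hpx : ContDiff ℝ 1 (px (K i)) := ((hK i).fderiv_right le_rfl).clm_apply contDiff_const
  have hKc : ∀ k, Continuous (K k) := fun k => (hK k).continuous
  rw [← integral_const_mul, ← integral_sub]
  · congr 1 with z
    simp only [Lop]
    ring
  · exact integrable_mul_apply_sub_mul_prod_erase hQcont hKc hKsupp
      (((hK i).continuous_fderiv two_ne_zero).clm_apply continuous_const)
      ((hKsupp i).fderiv_apply ℝ _) w i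
  · exact (integrable_mul_apply_sub_mul_prod_erase hQcont hKc hKsupp
      ((hpx.continuous_fderiv one_ne_zero).clm_apply continuous_const)
      (((hKsupp i).fderiv_apply ℝ _).fderiv_apply ℝ _) w i).const_mul c

theorem stmt5_general (n : ℕ) (c : ℝ)
    (K : Fin n → ℝ × ℝ → ℝ)
    (hK : ∀ i, ContDiff ℝ 2 (K i)) (hKsupp : ∀ i, HasCompactSupport (K i))
    (Q : (Fin n → ℝ × ℝ) → ℝ)
    (hQcont : Continuous Q)
    (hQinv : ∀ (h : ℝ × ℝ) (z : Fin n → ℝ × ℝ), Q (fun i => z i + h) = Q z) :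
    ∀ w : ℝ × ℝ,
      (∑ i, ∫ z : Fin n → ℝ × ℝ,
          Q z * (Lop c (K i) (w - z i) * ∏ k ∈ univ.erase i, K k (w - z k)))
      = c * ∑ i, ∑ j ∈ univ.erase i,
          ∫ z : Fin n → ℝ × ℝ,
            Q z * (px (K i) (w - z i) * px (K j) (w - z j)
              * ∏ k ∈ (univ.erase i).erase j, K k (w - z k)) := by
  intro w
  have hpt := sum_integral_mul_fderiv_mul_prod_erase_eq_zero hQcont hQinv
    (fun i => (hK i).of_le one_le_two) hKsupp w (1, 0)
  have hpxx := integral_mul_fderiv_fderiv_mul_prod_erase_eq_neg_sum hQcont hQinv hK hKsupp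
    w (0, 1)
  rw [sum_congr rfl fun i _ => integral_mul_Lop_mul_prod_erase hK hKsupp hQcont c w i,
    sum_sub_distrib, ← mul_sum]
  unfold pt px
  rw [hpt, sum_congr rfl fun j _ => hpxx j, sum_neg_distrib, zero_sub, mul_neg, neg_neg]
  congr 1
  exact sum_comm' (by simp [ne_comm])

theorem stmt5 (n : ℕ) (hn : 1 ≤ n) (c : ℝ)
    (K : Fin n → ℝ × ℝ → ℝ)
    (hK : ∀ i, ContDiff ℝ 2 (K i)) (hKsupp : ∀ i, HasCompactSupport (K i))
    (Q : (Fin n → ℝ × ℝ) → ℝ) (M : ℝ)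
    (hQbd : ∀ z, |Q z| ≤ M) (hQcont : Continuous Q)
    (hQinv : ∀ (h : ℝ × ℝ) (z : Fin n → ℝ × ℝ), Q (fun i => z i + h) = Q z) :
    ∀ w : ℝ × ℝ,
      (∑ i, ∫ z : Fin n → ℝ × ℝ,
          Q z * (Lop c (K i) (w - z i) * ∏ k ∈ univ.erase i, K k (w - z k)))
      = c * ∑ i, ∑ j ∈ univ.erase i,
          ∫ z : Fin n → ℝ × ℝ,
            Q z * (px (K i) (w - z i) * px (K j) (w - z j)
              * ∏ k ∈ (univ.erase i).erase j, K k (w - z k)) :=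
  stmt5_general n c K hK hKsupp Q hQcont hQinv
end

section
/- Let n ≥ 1, let c ∈ ℝ, let K₀, K₁,…,Kₙ : ℝ² → ℝ be twice continuously differentiable with compact support, and let Q : (ℝ²)^{n+1} → ℝ be bounded, continuous, and translation-invariant. Then for every w ∈ ℝ²: ∫_{(ℝ²)^{n+1}} Q(z₀,…,zₙ) (∂_x K₀)(z₀ − w) Σ_{i=1}^n (L_c K_i)(w − z_i) ∏_{k≠i} K_k(w − z_k) dz₀ ⋯ dzₙ = ∫_{(ℝ²)^{n+1}} Q(z₀,…,zₙ) (L_c K₀)(z₀ − w) Σ_{i=1}^n (∂_x K_i)(w − z_i) ∏_{k≠i} K_k(w − z_k) dz₀ ⋯ dzₙ + c ∫_{(ℝ²)^{n+1}} Q(z₀,…,zₙ) (∂_x K₀)(z₀ − w) Σ_{i≠j} (∂_x K_i)(w − z_i)(∂_x K_j)(w − z_j) ∏_{k∉{i,j}} K_k(w − z_k) dz₀ ⋯ dzₙ, where the last sum runs over all ordered pairs (i,j) with i ≠ j. -/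
open MeasureTheory Finset

/-!
By translation invariance of `Q`, `p ↦ ∫ Q(z) a(z₀ - p) ∏ bᵢ(p - zᵢ) dz`, which is the convolution
of `Q` with `y ↦ a(-y₀) ∏ bᵢ(yᵢ)` evaluated at the diagonal point `(p, …, p)`, is constant.
Differentiating it in a direction `e` moves an `e`-derivative from `a` onto the `bᵢ` (Leibniz rule).
Applied in the time direction to `∂ₓK₀` and in the space direction to `∂ₜK₀`, whose left-hand sides
agree by Schwarz, this identifies the `∂ₜ` parts of both sides. Applied in the space direction to
`∂ₓK₀` against `Kᵢ` replaced by `∂ₓKᵢ`, it turns the `∂ₓ²K₀` part into the `∂ₓ²Kᵢ` part plus the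
cross terms with `i ≠ j`.
-/

open scoped Convolution
open Function (update)

theorem forall_update_of_forall {ι α : Type*} [DecidableEq ι] {P : α → Prop} {b : ι → α}
    (hb : ∀ k, P (b k)) {i : ι} {f : α} (hf : P f) : ∀ k, P (update b i f k) :=
  (Function.forall_update_iff b fun _ g => P g).2 ⟨hf, fun k _ => hb k⟩

theorem prod_update_apply {ι α M : Type*} [DecidableEq ι] [CommMonoid M] {s : Finset ι} {i : ι}
    (hi : i ∈ s) (b : ι → α → M) (f : α → M) (v : ι → α) :
    ∏ k ∈ s, update b i f k (v k) = f (v i) * ∏ k ∈ s.erase i, b k (v k) := by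
  rw [prod_congr rfl fun k _ => Function.apply_update (fun k g => g (v k)) b i f k,
    prod_update_of_mem hi, sdiff_singleton_eq_erase]

theorem fderiv_fderiv_apply_comm {E F : Type*} [NormedAddCommGroup E] [NormedSpace ℝ E]
    [NormedAddCommGroup F] [NormedSpace ℝ F] {f : E → F} (hf : ContDiff ℝ 2 f) (u v x : E) :
    fderiv ℝ (fderiv ℝ f · v) x u = fderiv ℝ (fderiv ℝ f · u) x v := by
  have hf' : DifferentiableAt ℝ (fderiv ℝ f) x :=
    (hf.fderiv_right (m := 1) le_rfl).differentiable one_ne_zero x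
  simp only [fderiv_clm_apply hf' (differentiableAt_const _), fderiv_fun_const, Pi.zero_apply,
    ContinuousLinearMap.comp_zero, zero_add, ContinuousLinearMap.flip_apply]
  exact hf.contDiffAt.isSymmSndFDerivAt (by simp) u v

section TensorKernel

variable {V : Type*} [NormedAddCommGroup V] {n : ℕ}

noncomputable def tensorKernel (a : V → ℝ) (b : Fin n → V → ℝ) (y : V × (Fin n → V)) : ℝ :=
  a (-y.1) * ∏ i, b i (y.2 i)

theorem continuous_tensorKernel {a : V → ℝ} {b : Fin n → V → ℝ} (ha : Continuous a)
    (hb : ∀ i, Continuous (b i)) : Continuous (tensorKernel a b) := by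
  unfold tensorKernel
  fun_prop

theorem hasCompactSupport_tensorKernel {a : V → ℝ} {b : Fin n → V → ℝ}
    (ha : HasCompactSupport a) (hb : ∀ i, HasCompactSupport (b i)) :
    HasCompactSupport (tensorKernel a b) := by
  refine HasCompactSupport.intro
    ((ha.comp_homeomorph (Homeomorph.neg V)).prod (isCompact_univ_pi hb)) fun y hy => ?_
  simp only [Set.mem_prod, Set.mem_univ_pi, not_and_or, not_forall] at hy
  rcases hy with h₀ | ⟨i, hi⟩
  · have : a (-y.1) = 0 := image_eq_zero_of_notMem_tsupport (f := a ∘ Homeomorph.neg V) h₀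
    rw [tensorKernel, this, zero_mul]
  · have : b i (y.2 i) = 0 := image_eq_zero_of_notMem_tsupport hi
    rw [tensorKernel, prod_eq_zero (mem_univ i) this, mul_zero]

variable [NormedSpace ℝ V]

theorem contDiff_tensorKernel {k : WithTop ℕ∞} {a : V → ℝ} {b : Fin n → V → ℝ}
    (ha : ContDiff ℝ k a) (hb : ∀ i, ContDiff ℝ k (b i)) : ContDiff ℝ k (tensorKernel a b) := by
  unfold tensorKernel
  fun_prop

theorem fderiv_tensorKernel_apply_diag {a : V → ℝ} {b : Fin n → V → ℝ}
    (ha : Differentiable ℝ a) (hb : ∀ i, Differentiable ℝ (b i)) (y : V × (Fin n → V)) (e : V) :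
    fderiv ℝ (tensorKernel a b) y (e, fun _ => e)
      = -tensorKernel (fderiv ℝ a · e) b y
        + ∑ i, tensorKernel a (update b i (fderiv ℝ (b i) · e)) y := by
  classical
  have h₀ : HasFDerivAt (fun y : V × (Fin n → V) => a (-y.1))
      ((fderiv ℝ a (-y.1)).comp (-ContinuousLinearMap.fst ℝ V (Fin n → V))) y :=
    (ha _).hasFDerivAt.comp y (-ContinuousLinearMap.fst ℝ V (Fin n → V)).hasFDerivAt
  have hb' : ∀ i, HasFDerivAt (fun y : V × (Fin n → V) => b i (y.2 i))
      ((fderiv ℝ (b i) (y.2 i)).comp ((ContinuousLinearMap.proj i).comp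
        (ContinuousLinearMap.snd ℝ V (Fin n → V)))) y := fun i =>
    (hb i _).hasFDerivAt.comp y ((ContinuousLinearMap.proj i).comp
        (ContinuousLinearMap.snd ℝ V (Fin n → V))).hasFDerivAt
  have hH : HasFDerivAt (tensorKernel a b) _ y :=
    h₀.mul (HasFDerivAt.finsetProd (u := univ) fun i _ => hb' i)
  rw [hH.fderiv]
  simp only [ContinuousLinearMap.comp_neg, smul_neg, add_apply,
    smul_apply, _root_.sum_apply, ContinuousLinearMap.comp_apply,
    ContinuousLinearMap.coe_snd', ContinuousLinearMap.proj_apply, smul_eq_mul, mul_sum,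
    neg_apply, ContinuousLinearMap.coe_fst', tensorKernel,
    prod_update_apply (mem_univ _)]
  rw [add_comm]
  congr 1
  · ring
  · exact sum_congr rfl fun i _ => by ring

end TensorKernel

section KernelIntegral

variable {V : Type*} [NormedAddCommGroup V] [MeasureSpace V] {n : ℕ}

noncomputable def kernelIntegral (Q : V × (Fin n → V) → ℝ) (w : V) (a : V → ℝ)
    (b : Fin n → V → ℝ) : ℝ :=
  ∫ z, Q z * (a (z.1 - w) * ∏ i, b i (w - z.2 i))

theorem kernelIntegral_eq_convolution (Q : V × (Fin n → V) → ℝ) (w : V) (a : V → ℝ)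
    (b : Fin n → V → ℝ) :
    kernelIntegral Q w a b = (Q ⋆ tensorKernel a b) (w, fun _ => w) := by
  simp [kernelIntegral, convolution_def, tensorKernel]

variable [NormedSpace ℝ V] [FiniteDimensional ℝ V] [BorelSpace V] {Q : V × (Fin n → V) → ℝ}

theorem convolutionExists_tensorKernel (hQ : LocallyIntegrable Q) {a : V → ℝ}
    {b : Fin n → V → ℝ} (ha : Continuous a) (ha' : HasCompactSupport a)
    (hb : ∀ i, Continuous (b i)) (hb' : ∀ i, HasCompactSupport (b i)) :
    ConvolutionExists Q (tensorKernel a b) (ContinuousLinearMap.lsmul ℝ ℝ) :=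
  (hasCompactSupport_tensorKernel ha' hb').convolutionExists_right _ hQ
    (continuous_tensorKernel ha hb)

theorem integrable_kernelIntegrand (hQ : LocallyIntegrable Q) {a : V → ℝ} {b : Fin n → V → ℝ}
    (ha : Continuous a) (ha' : HasCompactSupport a) (hb : ∀ i, Continuous (b i))
    (hb' : ∀ i, HasCompactSupport (b i)) (w : V) :
    Integrable fun z => Q z * (a (z.1 - w) * ∏ i, b i (w - z.2 i)) := by
  simpa [ConvolutionExistsAt, tensorKernel] using
    convolutionExists_tensorKernel hQ ha ha' hb hb' (w, fun _ => w)

theorem integral_mul_sum_update (hQ : LocallyIntegrable Q) {a : V → ℝ} {b f : Fin n → V → ℝ}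
    (ha : Continuous a) (ha' : HasCompactSupport a) (hb : ∀ i, Continuous (b i))
    (hb' : ∀ i, HasCompactSupport (b i)) (hf : ∀ i, Continuous (f i))
    (hf' : ∀ i, HasCompactSupport (f i)) (w : V) :
    ∫ z, Q z * (a (z.1 - w) * ∑ i, f i (w - z.2 i) * ∏ k ∈ univ.erase i, b k (w - z.2 k))
      = ∑ i, kernelIntegral Q w a (update b i (f i)) := by
  simp only [kernelIntegral]
  rw [← integral_finsetSum _ fun i _ => integrable_kernelIntegrand hQ ha ha'
    (forall_update_of_forall hb (hf i)) (forall_update_of_forall hb' (hf' i)) w]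
  congr 1 with z
  simp only [prod_update_apply (mem_univ _), mul_sum]

theorem integral_mul_sum_sum_update (hQ : LocallyIntegrable Q) {a : V → ℝ}
    {b f : Fin n → V → ℝ} (ha : Continuous a) (ha' : HasCompactSupport a)
    (hb : ∀ i, Continuous (b i)) (hb' : ∀ i, HasCompactSupport (b i))
    (hf : ∀ i, Continuous (f i)) (hf' : ∀ i, HasCompactSupport (f i)) (w : V) :
    ∫ z, Q z * (a (z.1 - w) * ∑ i, ∑ j ∈ univ.erase i, f i (w - z.2 i) * f j (w - z.2 j)
        * ∏ k ∈ (univ.erase i).erase j, b k (w - z.2 k))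
      = ∑ i, ∑ j ∈ univ.erase i, kernelIntegral Q w a (update (update b i (f i)) j (f j)) := by
  have hint : ∀ i j, Integrable fun z => Q z * (a (z.1 - w) *
      ∏ k, update (update b i (f i)) j (f j) k (w - z.2 k)) := fun i j =>
    integrable_kernelIntegrand hQ ha ha'
      (forall_update_of_forall (forall_update_of_forall hb (hf i)) (hf j))
      (forall_update_of_forall (forall_update_of_forall hb' (hf' i)) (hf' j)) w
  simp only [kernelIntegral]
  simp_rw [← integral_finsetSum _ fun i _ => hint _ i]
  rw [← integral_finsetSum _ fun i _ => integrable_finsetSum _ fun j _ => hint i j]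
  congr 1 with z
  simp only [mul_sum]
  refine sum_congr rfl fun i _ => sum_congr rfl fun j hj => ?_
  rw [prod_update_apply (mem_univ j), prod_update_apply (mem_erase.2 ⟨(ne_of_mem_erase hj).symm,
    mem_univ i⟩), erase_right_comm]
  ring

theorem kernelIntegral_sub_mul_left (hQ : LocallyIntegrable Q) {f g : V → ℝ}
    {b : Fin n → V → ℝ} (hf : Continuous f) (hf' : HasCompactSupport f) (hg : Continuous g)
    (hg' : HasCompactSupport g) (hb : ∀ i, Continuous (b i)) (hb' : ∀ i, HasCompactSupport (b i))
    (w : V) (c : ℝ) :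
    kernelIntegral Q w (fun x => f x - c * g x) b
      = kernelIntegral Q w f b - c * kernelIntegral Q w g b := by
  simp only [kernelIntegral]
  rw [← integral_const_mul, ← integral_sub (integrable_kernelIntegrand hQ hf hf' hb hb' w)
    ((integrable_kernelIntegrand hQ hg hg' hb hb' w).const_mul c)]
  congr 1 with z
  ring

theorem kernelIntegral_update_sub_mul (hQ : LocallyIntegrable Q) {a : V → ℝ}
    {b : Fin n → V → ℝ} {f g : V → ℝ} (ha : Continuous a) (ha' : HasCompactSupport a)
    (hb : ∀ i, Continuous (b i)) (hb' : ∀ i, HasCompactSupport (b i)) (hf : Continuous f)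
    (hf' : HasCompactSupport f) (hg : Continuous g) (hg' : HasCompactSupport g) (w : V) (c : ℝ)
    (i : Fin n) :
    kernelIntegral Q w a (update b i fun x => f x - c * g x)
      = kernelIntegral Q w a (update b i f) - c * kernelIntegral Q w a (update b i g) := by
  simp only [kernelIntegral]
  rw [← integral_const_mul, ← integral_sub
    (integrable_kernelIntegrand hQ ha ha' (forall_update_of_forall hb hf)
      (forall_update_of_forall hb' hf') w)
    ((integrable_kernelIntegrand hQ ha ha' (forall_update_of_forall hb hg)
      (forall_update_of_forall hb' hg') w).const_mul c)]
  congr 1 with z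
  simp only [prod_update_apply (mem_univ i)]
  ring

variable [(volume : Measure V).IsAddHaarMeasure]

-- Instance search does not unfold `volume` on a product to `Measure.prod`.
instance : (volume : Measure (V × (Fin n → V))).IsAddHaarMeasure :=
  Measure.prod.instIsAddHaarMeasure _ _

theorem convolution_add_diag {E : Type*} [NormedAddCommGroup E] [NormedSpace ℝ E]
    (hQinv : ∀ (h z₀ : V) (zz : Fin n → V), Q (z₀ + h, fun i => zz i + h) = Q (z₀, zz))
    (L : ℝ →L[ℝ] E →L[ℝ] E) (g : V × (Fin n → V) → E) (x : V × (Fin n → V)) (h : V) :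
    (Q ⋆[L] g) (x + (h, fun _ => h)) = (Q ⋆[L] g) x := by
  simp only [convolution_def]
  rw [← integral_add_left_eq_self _ ((h, fun _ => h) : V × (Fin n → V))]
  congr 1 with t
  rw [add_comm _ t, add_sub_add_right_eq_sub]
  exact congrArg (fun q => L q _) (hQinv h t.1 t.2)

theorem convolution_fderiv_apply_diag_eq_zero (hQ : LocallyIntegrable Q)
    (hQinv : ∀ (h z₀ : V) (zz : Fin n → V), Q (z₀ + h, fun i => zz i + h) = Q (z₀, zz))
    {g : V × (Fin n → V) → ℝ} (hg : ContDiff ℝ 1 g) (hg' : HasCompactSupport g)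
    (x : V × (Fin n → V)) (e : V) :
    (Q ⋆ fun y => fderiv ℝ g y (e, fun _ => e)) x = 0 := by
  have hline : HasDerivAt (fun t : ℝ => (Q ⋆ g) (x + t • (e, fun _ => e))) _ 0 :=
    (hg'.hasFDerivAt_convolution_right _ hQ hg x).hasLineDerivAt (e, fun _ => e)
  simp only [Prod.smul_mk, Pi.smul_def, convolution_add_diag hQinv] at hline
  rw [← convolution_precompR_apply _ hQ (hg'.fderiv ℝ) (hg.continuous_fderiv one_ne_zero)]
  exact hline.unique (hasDerivAt_const _ _)

theorem kernelIntegral_fderiv_eq_sum (hQ : LocallyIntegrable Q)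
    (hQinv : ∀ (h z₀ : V) (zz : Fin n → V), Q (z₀ + h, fun i => zz i + h) = Q (z₀, zz))
    {a : V → ℝ} {b : Fin n → V → ℝ} (ha : ContDiff ℝ 1 a) (ha' : HasCompactSupport a)
    (hb : ∀ i, ContDiff ℝ 1 (b i)) (hb' : ∀ i, HasCompactSupport (b i)) (w e : V) :
    kernelIntegral Q w (fderiv ℝ a · e) b
      = ∑ i, kernelIntegral Q w a (update b i (fderiv ℝ (b i) · e)) := by
  have hzero := convolution_fderiv_apply_diag_eq_zero hQ hQinv (contDiff_tensorKernel ha hb)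
    (hasCompactSupport_tensorKernel ha' hb') (w, fun _ => w) e
  have hex₁ := convolutionExists_tensorKernel hQ
    ((ha.continuous_fderiv one_ne_zero).clm_apply continuous_const) (ha'.fderiv_apply ℝ e)
    (fun i => (hb i).continuous) hb' (w, fun _ => w)
  have hex₂ := fun i => convolutionExists_tensorKernel hQ ha.continuous ha'
    (forall_update_of_forall (i := i) (fun k => (hb k).continuous)
      (((hb i).continuous_fderiv one_ne_zero).clm_apply continuous_const))
    (forall_update_of_forall (i := i) hb' ((hb' i).fderiv_apply ℝ e)) (w, fun _ => w)
  simp only [fderiv_tensorKernel_apply_diag (ha.differentiable one_ne_zero)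
    (fun i => (hb i).differentiable one_ne_zero), convolution_def, map_add, map_neg,
    map_sum] at hzero
  rw [integral_add hex₁.fun_neg (integrable_finsetSum _ fun i _ => hex₂ i), integral_neg,
    integral_finsetSum _ fun i _ => hex₂ i] at hzero
  simp only [kernelIntegral_eq_convolution, convolution_def]
  linarith

theorem kernelIntegral_fderiv_update_eq (hQ : LocallyIntegrable Q)
    (hQinv : ∀ (h z₀ : V) (zz : Fin n → V), Q (z₀ + h, fun i => zz i + h) = Q (z₀, zz))
    {a : V → ℝ} {b : Fin n → V → ℝ} {f : V → ℝ} (ha : ContDiff ℝ 1 a)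
    (ha' : HasCompactSupport a) (hb : ∀ i, ContDiff ℝ 1 (b i))
    (hb' : ∀ i, HasCompactSupport (b i)) (hf : ContDiff ℝ 1 f) (hf' : HasCompactSupport f)
    (w e : V) (i : Fin n) :
    kernelIntegral Q w (fderiv ℝ a · e) (update b i f)
      = kernelIntegral Q w a (update b i (fderiv ℝ f · e))
        + ∑ j ∈ univ.erase i,
            kernelIntegral Q w a (update (update b i f) j (fderiv ℝ (b j) · e)) := by
  rw [kernelIntegral_fderiv_eq_sum hQ hQinv ha ha' (forall_update_of_forall hb hf)
    (forall_update_of_forall hb' hf') w e, ← add_sum_erase _ _ (mem_univ i)]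
  congr 1
  · simp
  · refine sum_congr rfl fun j hj => ?_
    rw [Function.update_of_ne (ne_of_mem_erase hj)]

end KernelIntegral

section Parabolic

variable {f : ℝ × ℝ → ℝ}

theorem contDiff_px (hf : ContDiff ℝ 2 f) : ContDiff ℝ 1 (px f) :=
  (hf.fderiv_right (m := 1) le_rfl).clm_apply contDiff_const

theorem contDiff_pt (hf : ContDiff ℝ 2 f) : ContDiff ℝ 1 (pt f) :=
  (hf.fderiv_right (m := 1) le_rfl).clm_apply contDiff_const

theorem continuous_px (hf : ContDiff ℝ 1 f) : Continuous (px f) :=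
  (hf.continuous_fderiv one_ne_zero).clm_apply continuous_const

theorem hasCompactSupport_px (hf : HasCompactSupport f) : HasCompactSupport (px f) :=
  hf.fderiv_apply ℝ (0, 1)

theorem hasCompactSupport_pt (hf : HasCompactSupport f) : HasCompactSupport (pt f) :=
  hf.fderiv_apply ℝ (1, 0)

theorem continuous_Lop (hf : ContDiff ℝ 2 f) (c : ℝ) : Continuous (Lop c f) :=
  (contDiff_pt hf).continuous.sub (continuous_const.mul (continuous_px (contDiff_px hf)))

theorem hasCompactSupport_Lop (hf : HasCompactSupport f) (c : ℝ) :
    HasCompactSupport (Lop c f) :=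
  (hasCompactSupport_pt hf).sub
    ((hasCompactSupport_px (hasCompactSupport_px hf)).mul_left (f := fun _ => c))

end Parabolic

theorem sum_kernelIntegral_update_Lop {n : ℕ} {Q : (ℝ × ℝ) × (Fin n → ℝ × ℝ) → ℝ}
    (hQ : LocallyIntegrable Q)
    (hQinv : ∀ (h z₀ : ℝ × ℝ) (zz : Fin n → ℝ × ℝ), Q (z₀ + h, fun i => zz i + h) = Q (z₀, zz))
    {K₀ : ℝ × ℝ → ℝ} {K : Fin n → ℝ × ℝ → ℝ} (hK₀ : ContDiff ℝ 2 K₀)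
    (hK₀' : HasCompactSupport K₀) (hK : ∀ i, ContDiff ℝ 2 (K i))
    (hK' : ∀ i, HasCompactSupport (K i)) (c : ℝ) (w : ℝ × ℝ) :
    ∑ i, kernelIntegral Q w (px K₀) (update K i (Lop c (K i)))
      = ∑ i, kernelIntegral Q w (Lop c K₀) (update K i (px (K i)))
        + c * ∑ i, ∑ j ∈ univ.erase i, kernelIntegral Q w (px K₀)
            (update (update K i (px (K i))) j (px (K j))) := by
  have hK1 : ∀ i, ContDiff ℝ 1 (K i) := fun i => (hK i).of_le one_le_two
  have hKc : ∀ i, Continuous (K i) := fun i => (hK i).continuous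
  have htime : ∑ i, kernelIntegral Q w (px K₀) (update K i (pt (K i)))
      = ∑ i, kernelIntegral Q w (pt K₀) (update K i (px (K i))) :=
    calc _ = kernelIntegral Q w (fderiv ℝ (px K₀) · (1, 0)) K :=
          (kernelIntegral_fderiv_eq_sum hQ hQinv (contDiff_px hK₀) (hasCompactSupport_px hK₀')
            hK1 hK' w _).symm
      _ = kernelIntegral Q w (fderiv ℝ (pt K₀) · (0, 1)) K := by
          congr 1 with x
          exact fderiv_fderiv_apply_comm hK₀ _ _ x
      _ = _ := kernelIntegral_fderiv_eq_sum hQ hQinv (contDiff_pt hK₀) (hasCompactSupport_pt hK₀')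
            hK1 hK' w _
  have hspace : ∀ i, kernelIntegral Q w (px (px K₀)) (update K i (px (K i)))
      = kernelIntegral Q w (px K₀) (update K i (px (px (K i))))
        + ∑ j ∈ univ.erase i, kernelIntegral Q w (px K₀)
            (update (update K i (px (K i))) j (px (K j))) := fun i =>
    kernelIntegral_fderiv_update_eq hQ hQinv (contDiff_px hK₀) (hasCompactSupport_px hK₀') hK1 hK'
      (contDiff_px (hK i)) (hasCompactSupport_px (hK' i)) w _ i
  have hleft : ∀ i, kernelIntegral Q w (Lop c K₀) (update K i (px (K i)))
      = kernelIntegral Q w (pt K₀) (update K i (px (K i)))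
        - c * kernelIntegral Q w (px (px K₀)) (update K i (px (K i))) := fun i =>
    kernelIntegral_sub_mul_left hQ (contDiff_pt hK₀).continuous (hasCompactSupport_pt hK₀')
      (continuous_px (contDiff_px hK₀)) (hasCompactSupport_px (hasCompactSupport_px hK₀'))
      (forall_update_of_forall hKc (contDiff_px (hK i)).continuous)
      (forall_update_of_forall hK' (hasCompactSupport_px (hK' i))) w c
  have hright : ∀ i, kernelIntegral Q w (px K₀) (update K i (Lop c (K i)))
      = kernelIntegral Q w (px K₀) (update K i (pt (K i)))
        - c * kernelIntegral Q w (px K₀) (update K i (px (px (K i)))) := fun i =>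
    kernelIntegral_update_sub_mul hQ (contDiff_px hK₀).continuous (hasCompactSupport_px hK₀') hKc
      hK' (contDiff_pt (hK i)).continuous (hasCompactSupport_pt (hK' i))
      (continuous_px (contDiff_px (hK i))) (hasCompactSupport_px (hasCompactSupport_px (hK' i)))
      w c i
  simp only [hleft, hright, hspace, mul_add, sum_sub_distrib, sum_add_distrib, ← mul_sum, htime]
  ring

theorem stmt7_general (n : ℕ) (c : ℝ)
    (K₀ : ℝ × ℝ → ℝ) (K : Fin n → ℝ × ℝ → ℝ)
    (hK₀ : ContDiff ℝ 2 K₀) (hK₀supp : HasCompactSupport K₀)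
    (hK : ∀ i, ContDiff ℝ 2 (K i)) (hKsupp : ∀ i, HasCompactSupport (K i))
    (Q : (ℝ × ℝ) × (Fin n → ℝ × ℝ) → ℝ)
    (hQcont : Continuous Q)
    (hQinv : ∀ (h z₀ : ℝ × ℝ) (zz : Fin n → ℝ × ℝ),
      Q (z₀ + h, fun i => zz i + h) = Q (z₀, zz)) :
    ∀ w : ℝ × ℝ,
      (∫ z : (ℝ × ℝ) × (Fin n → ℝ × ℝ),
          Q z * (px K₀ (z.1 - w)
            * ∑ i, Lop c (K i) (w - z.2 i) * ∏ k ∈ univ.erase i, K k (w - z.2 k)))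
      = (∫ z : (ℝ × ℝ) × (Fin n → ℝ × ℝ),
            Q z * (Lop c K₀ (z.1 - w)
              * ∑ i, px (K i) (w - z.2 i) * ∏ k ∈ univ.erase i, K k (w - z.2 k)))
        + c * ∫ z : (ℝ × ℝ) × (Fin n → ℝ × ℝ),
            Q z * (px K₀ (z.1 - w) * ∑ i, ∑ j ∈ univ.erase i,
              px (K i) (w - z.2 i) * px (K j) (w - z.2 j)
                * ∏ k ∈ (univ.erase i).erase j, K k (w - z.2 k)) := by
  intro w
  have hQ : LocallyIntegrable Q := hQcont.locallyIntegrable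
  have hKc : ∀ i, Continuous (K i) := fun i => (hK i).continuous
  have hpxKc : ∀ i, Continuous (px (K i)) := fun i => (contDiff_px (hK i)).continuous
  have hpxKs : ∀ i, HasCompactSupport (px (K i)) := fun i => hasCompactSupport_px (hKsupp i)
  rw [integral_mul_sum_update hQ (contDiff_px hK₀).continuous (hasCompactSupport_px hK₀supp) hKc
      hKsupp (fun i => continuous_Lop (hK i) c) (fun i => hasCompactSupport_Lop (hKsupp i) c),
    integral_mul_sum_update hQ (continuous_Lop hK₀ c) (hasCompactSupport_Lop hK₀supp c) hKc hKsupp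
      hpxKc hpxKs,
    integral_mul_sum_sum_update hQ (contDiff_px hK₀).continuous (hasCompactSupport_px hK₀supp) hKc
      hKsupp hpxKc hpxKs]
  exact sum_kernelIntegral_update_Lop hQ hQinv hK₀ hK₀supp hK hKsupp c w

theorem stmt7 (n : ℕ) (hn : 1 ≤ n) (c : ℝ)
    (K₀ : ℝ × ℝ → ℝ) (K : Fin n → ℝ × ℝ → ℝ)
    (hK₀ : ContDiff ℝ 2 K₀) (hK₀supp : HasCompactSupport K₀)
    (hK : ∀ i, ContDiff ℝ 2 (K i)) (hKsupp : ∀ i, HasCompactSupport (K i))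
    (Q : (ℝ × ℝ) × (Fin n → ℝ × ℝ) → ℝ) (M : ℝ)
    (hQbd : ∀ z, |Q z| ≤ M) (hQcont : Continuous Q)
    (hQinv : ∀ (h z₀ : ℝ × ℝ) (zz : Fin n → ℝ × ℝ),
      Q (z₀ + h, fun i => zz i + h) = Q (z₀, zz)) :
    ∀ w : ℝ × ℝ,
      (∫ z : (ℝ × ℝ) × (Fin n → ℝ × ℝ),
          Q z * (px K₀ (z.1 - w)
            * ∑ i, Lop c (K i) (w - z.2 i) * ∏ k ∈ univ.erase i, K k (w - z.2 k)))
      = (∫ z : (ℝ × ℝ) × (Fin n → ℝ × ℝ),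
            Q z * (Lop c K₀ (z.1 - w)
              * ∑ i, px (K i) (w - z.2 i) * ∏ k ∈ univ.erase i, K k (w - z.2 k)))
        + c * ∫ z : (ℝ × ℝ) × (Fin n → ℝ × ℝ),
            Q z * (px K₀ (z.1 - w) * ∑ i, ∑ j ∈ univ.erase i,
              px (K i) (w - z.2 i) * px (K j) (w - z.2 j)
                * ∏ k ∈ (univ.erase i).erase j, K k (w - z.2 k)) :=
  stmt7_general n c K₀ K hK₀ hK₀supp hK hKsupp Q hQcont hQinv
end

section
/- Let n ≥ 1 and c ∈ ℝ. Let (Ω, ℱ, P) be a probability space and ξ : Ω × ℝ² → ℝ a jointly measurable random field such that ξ(ω, ·) is continuous for every ω and |ξ(ω, z)| ≤ M for some constant M and all (ω, z). Assume ξ is (n+1)-point stationary: for all h, z₀,…,zₙ ∈ ℝ², E[∏_{i=0}^n ξ(z_i + h)] = E[∏_{i=0}^n ξ(z_i)]. Let K₀, K₁,…,Kₙ : ℝ² → ℝ be twice continuously differentiable with compact support; for a kernel K write (K ∗ ξ)(w) = ∫_{ℝ²} K(w − z) ξ(z) dz and Ǩ(z) = K(−z). Then for every w ∈ ℝ²: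 E[ (Ǩ₀ ∗ ξ)(w) · ( Σ_{i=1}^n ((L_c K_i) ∗ ξ)(w) ∏_{k≠i} (K_k ∗ ξ)(w) − c Σ_{i≠j} ((∂_x K_i) ∗ ξ)(w) ((∂_x K_j) ∗ ξ)(w) ∏_{k∉{i,j}} (K_k ∗ ξ)(w) ) ] = E[ ((L_c K₀)ˇ ∗ ξ)(w) · ∏_{k=1}^n (K_k ∗ ξ)(w) ], where (L_c K₀)ˇ(z) = (L_c K₀)(−z) and the sum over i ≠ j runs over all ordered pairs. -/
open MeasureTheory Finset

/-- Convolution `(K ∗ f)(w) = ∫ K(w − z) f(z) dz` on `ℝ × ℝ`. -/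
noncomputable def conv (K f : ℝ × ℝ → ℝ) (w : ℝ × ℝ) : ℝ :=
  ∫ z : ℝ × ℝ, K (w - z) * f z

/-- Reversed kernel `Ǩ(z) = K(−z)`. -/
def rev (K : ℝ × ℝ → ℝ) : ℝ × ℝ → ℝ := fun z => K (-z)

/-!
Stationarity and Fubini make the expectation of a product of convolutions `(qᵢ ∗ ξ)(yᵢ)`
invariant under a common translation of the points `yᵢ`. Hence, for every direction `v`,
`F(s) = E[(Ǩ₀ ∗ ξ)(w) ∏ₖ (Kₖ ∗ ξ)(w + s v)]` and `G(s) = E[(Ǩ₀ ∗ ξ)(w − s v) ∏ₖ (Kₖ ∗ ξ)(w)]`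
coincide. Both may be differentiated under the convolution integral and, as `|ξ| ≤ M`, under
the expectation, so that every derivative falls on a kernel. On `F` the product rule produces
the sum over `i` and the sum over ordered pairs `i ≠ j`; on `G` the reflection `z ↦ −z` and the
sign of `w − s v` cancel, turning the derivative of `Ǩ₀` into `(∂_v K₀)ˇ`. The theorem is
`F'(0) − c F''(0) = G'(0) − c G''(0)`, with `v = (1, 0)` for the first derivative and
`v = (0, 1)` for the second.
-/

theorem HasDerivAt.sum_mul_prod_erase {𝕜 𝔸 ι : Type*} [NontriviallyNormedField 𝕜]
    [NormedCommRing 𝔸] [NormedAlgebra 𝕜 𝔸] [DecidableEq ι] (u : Finset ι)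
    {f f' : ι → 𝕜 → 𝔸} {f'' : ι → 𝔸} {x : 𝕜} (hf : ∀ i ∈ u, HasDerivAt (f i) (f' i x) x)
    (hf' : ∀ i ∈ u, HasDerivAt (f' i) (f'' i) x) :
    HasDerivAt (fun x => ∑ i ∈ u, f' i x * ∏ j ∈ u.erase i, f j x)
      (∑ i ∈ u, (f'' i * ∏ j ∈ u.erase i, f j x
        + ∑ j ∈ u.erase i, f' i x * f' j x * ∏ k ∈ (u.erase i).erase j, f k x)) x := by
  have h : HasDerivAt (fun x => ∑ i ∈ u, f' i x * ∏ j ∈ u.erase i, f j x)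
      (∑ i ∈ u, (f'' i * ∏ j ∈ u.erase i, f j x
        + f' i x * ∑ j ∈ u.erase i, (∏ k ∈ (u.erase i).erase j, f k x) • f' j x)) x :=
    .fun_sum fun i hi =>
      (hf' i hi).mul (HasDerivAt.fun_finsetProd fun j hj => hf j (mem_of_mem_erase hj))
  convert h using 1
  refine sum_congr rfl fun i _ => ?_
  rw [mul_sum]
  congr 1
  exact sum_congr rfl fun j _ => by rw [smul_eq_mul]; ring

section

variable {𝕜 E F : Type*} [NontriviallyNormedField 𝕜] [NormedAddCommGroup E] [NormedSpace 𝕜 E]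
  [NormedAddCommGroup F] [NormedSpace 𝕜 F] {g : E → F}

theorem ContDiff.fderiv_apply_const {n m : WithTop ℕ∞} (hg : ContDiff 𝕜 n g) (hmn : m + 1 ≤ n)
    (v : E) : ContDiff 𝕜 m (fderiv 𝕜 g · v) :=
  (hg.fderiv_right hmn).clm_apply contDiff_const

theorem ContDiff.continuous_fderiv_apply_const (hg : ContDiff 𝕜 1 g) (v : E) :
    Continuous (fderiv 𝕜 g · v) :=
  (hg.continuous_fderiv one_ne_zero).clm_apply continuous_const

end

section Kernels

variable {Q : ℝ × ℝ → ℝ}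

theorem ContDiff.rev {n : WithTop ℕ∞} (hQ : ContDiff ℝ n Q) : ContDiff ℝ n (rev Q) :=
  hQ.comp contDiff_neg

theorem Continuous.rev (hQ : Continuous Q) : Continuous (rev Q) :=
  hQ.comp continuous_neg

theorem HasCompactSupport.rev (hQ : HasCompactSupport Q) : HasCompactSupport (rev Q) :=
  hQ.comp_homeomorph (Homeomorph.neg (ℝ × ℝ))

theorem fderiv_rev_apply_neg (hQ : Differentiable ℝ Q) (v : ℝ × ℝ) :
    (fderiv ℝ (rev Q) · (-v)) = rev (fderiv ℝ Q · v) := by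
  funext u
  have h : HasFDerivAt (rev Q) ((fderiv ℝ Q (-u)).comp (-ContinuousLinearMap.id ℝ _)) u :=
    (hQ (-u)).hasFDerivAt.comp u (hasFDerivAt_id u).neg
  simp [h.fderiv, rev]

end Kernels

section Convolution

variable {Q f : ℝ × ℝ → ℝ}

theorem conv_eq_convolution (Q f : ℝ × ℝ → ℝ) :
    conv Q f = MeasureTheory.convolution f Q (ContinuousLinearMap.mul ℝ ℝ) volume := by
  funext y
  simp only [conv, MeasureTheory.convolution, ContinuousLinearMap.mul_apply', mul_comm]

theorem hasDerivAt_conv_add_smul (hQ : ContDiff ℝ 1 Q) (hQs : HasCompactSupport Q)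
    (hf : LocallyIntegrable f) (y v : ℝ × ℝ) (s : ℝ) :
    HasDerivAt (fun s : ℝ => conv Q f (y + s • v)) (conv (fderiv ℝ Q · v) f (y + s • v)) s := by
  have hL := conv_eq_convolution Q f ▸
    hQs.hasFDerivAt_convolution_right (ContinuousLinearMap.mul ℝ ℝ) hf hQ (y + s • v)
  have hline : HasDerivAt (fun s : ℝ => y + s • v) v s := by
    simpa using ((hasDerivAt_id s).smul_const v).const_add y
  have h := hL.comp_hasDerivAt s hline
  rwa [convolution_precompR_apply (L := ContinuousLinearMap.mul ℝ ℝ) hf (hQs.fderiv ℝ)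
    (hQ.continuous_fderiv one_ne_zero), ← conv_eq_convolution] at h

theorem hasDerivAt_conv_rev_sub_smul (hQ : ContDiff ℝ 1 Q) (hQs : HasCompactSupport Q)
    (hf : LocallyIntegrable f) (y v : ℝ × ℝ) (s : ℝ) :
    HasDerivAt (fun s : ℝ => conv (rev Q) f (y - s • v))
      (conv (rev (fderiv ℝ Q · v)) f (y - s • v)) s := by
  have h := hasDerivAt_conv_add_smul hQ.rev hQs.rev hf y (-v) s
  rw [fderiv_rev_apply_neg (hQ.differentiable one_ne_zero)] at h
  simpa [sub_eq_add_neg] using h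

theorem locallyIntegrable_of_abs_le (hf : AEStronglyMeasurable f) {M : ℝ}
    (hbd : ∀ z, |f z| ≤ M) : LocallyIntegrable f :=
  (memLp_top_of_bound hf M (.of_forall hbd)).locallyIntegrable le_top

theorem integrable_conv_integrand (hQ : Integrable Q) (hf : AEStronglyMeasurable f) {M : ℝ}
    (hbd : ∀ z, |f z| ≤ M) (y : ℝ × ℝ) : Integrable (fun z => Q (y - z) * f z) :=
  (hQ.comp_sub_left y).mul_bdd hf (.of_forall hbd)

theorem abs_conv_le (hQ : Integrable Q) (hf : AEStronglyMeasurable f) {M : ℝ}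
    (hbd : ∀ z, |f z| ≤ M) (y : ℝ × ℝ) : |conv Q f y| ≤ (∫ z, |Q z|) * M := by
  calc |conv Q f y| ≤ ∫ z, |Q (y - z) * f z| := abs_integral_le_integral_abs
    _ ≤ ∫ z, |Q (y - z)| * M := by
        refine integral_mono (integrable_conv_integrand hQ hf hbd y).abs
          ((hQ.comp_sub_left y).abs.mul_const M) fun z => ?_
        rw [abs_mul]
        exact mul_le_mul_of_nonneg_left (hbd z) (abs_nonneg _)
    _ = (∫ z, |Q z|) * M := by
        rw [integral_mul_const, integral_sub_left_eq_self (fun z => |Q z|)]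

theorem conv_sub_const_mul {Q₁ Q₂ : ℝ × ℝ → ℝ} (hQ₁ : Integrable Q₁) (hQ₂ : Integrable Q₂)
    (hf : AEStronglyMeasurable f) {M : ℝ} (hbd : ∀ z, |f z| ≤ M) (c : ℝ) (y : ℝ × ℝ) :
    conv (fun u => Q₁ u - c * Q₂ u) f y = conv Q₁ f y - c * conv Q₂ f y := by
  simp only [conv, sub_mul, mul_assoc]
  rw [integral_sub (integrable_conv_integrand hQ₁ hf hbd y)
    ((integrable_conv_integrand hQ₂ hf hbd y).const_mul c), integral_const_mul]

end Convolution

section Parabolic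

variable {Q f : ℝ × ℝ → ℝ} {M : ℝ}

theorem integrable_fderiv_apply (hQ : ContDiff ℝ 1 Q) (hQs : HasCompactSupport Q) (v : ℝ × ℝ) :
    Integrable (fderiv ℝ Q · v) :=
  (hQ.continuous_fderiv_apply_const v).integrable_of_hasCompactSupport (hQs.fderiv_apply ℝ v)

theorem integrable_pt (hQ : ContDiff ℝ 2 Q) (hQs : HasCompactSupport Q) : Integrable (pt Q) :=
  integrable_fderiv_apply (hQ.of_le one_le_two) hQs (1, 0)

theorem integrable_px_px (hQ : ContDiff ℝ 2 Q) (hQs : HasCompactSupport Q) :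
    Integrable (px (px Q)) :=
  integrable_fderiv_apply (hQ.fderiv_apply_const (by norm_num) (0, 1)) (hQs.fderiv_apply ℝ _) _

theorem conv_Lop (hQ : ContDiff ℝ 2 Q) (hQs : HasCompactSupport Q) (hf : AEStronglyMeasurable f)
    (hbd : ∀ z, |f z| ≤ M) (c : ℝ) (y : ℝ × ℝ) :
    conv (Lop c Q) f y = conv (pt Q) f y - c * conv (px (px Q)) f y :=
  conv_sub_const_mul (integrable_pt hQ hQs) (integrable_px_px hQ hQs) hf hbd c y

theorem conv_rev_Lop (hQ : ContDiff ℝ 2 Q) (hQs : HasCompactSupport Q)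
    (hf : AEStronglyMeasurable f) (hbd : ∀ z, |f z| ≤ M) (c : ℝ) (y : ℝ × ℝ) :
    conv (rev (Lop c Q)) f y = conv (rev (pt Q)) f y - c * conv (rev (px (px Q))) f y :=
  conv_sub_const_mul (integrable_pt hQ hQs).comp_neg (integrable_px_px hQ hQs).comp_neg hf hbd c y

end Parabolic

section UniformlyBounded

variable {Ω α : Type*} [MeasurableSpace Ω]

def UnifBoundedMeasurable (g : Ω → α → ℝ) : Prop :=
  (∀ a, Measurable fun ω => g ω a) ∧ ∃ C, ∀ ω a, |g ω a| ≤ C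

namespace UnifBoundedMeasurable

variable {g h : Ω → α → ℝ}

theorem const (c : ℝ) : UnifBoundedMeasurable fun (_ : Ω) (_ : α) => c :=
  ⟨fun _ => measurable_const, |c|, fun _ _ => le_rfl⟩

theorem mul (hg : UnifBoundedMeasurable g) (hh : UnifBoundedMeasurable h) :
    UnifBoundedMeasurable fun ω a => g ω a * h ω a := by
  obtain ⟨hgm, C, hC⟩ := hg
  obtain ⟨hhm, D, hD⟩ := hh
  refine ⟨fun a => (hgm a).mul (hhm a), C * D, fun ω a => ?_⟩
  rw [abs_mul]
  exact mul_le_mul (hC ω a) (hD ω a) (abs_nonneg _) ((abs_nonneg _).trans (hC ω a))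

theorem add (hg : UnifBoundedMeasurable g) (hh : UnifBoundedMeasurable h) :
    UnifBoundedMeasurable fun ω a => g ω a + h ω a := by
  obtain ⟨hgm, C, hC⟩ := hg
  obtain ⟨hhm, D, hD⟩ := hh
  exact ⟨fun a => (hgm a).add (hhm a), C + D,
    fun ω a => (abs_add_le _ _).trans (add_le_add (hC ω a) (hD ω a))⟩

theorem finset_sum {ι : Type*} (s : Finset ι) {g : ι → Ω → α → ℝ}
    (hg : ∀ i ∈ s, UnifBoundedMeasurable (g i)) :
    UnifBoundedMeasurable fun ω a => ∑ i ∈ s, g i ω a := by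
  classical
  induction s using Finset.induction_on with
  | empty => simpa using const 0
  | insert i s hi ih =>
    simp_rw [Finset.sum_insert hi]
    exact (hg i (mem_insert_self i s)).add (ih fun j hj => hg j (mem_insert_of_mem hj))

theorem finset_prod {ι : Type*} (s : Finset ι) {g : ι → Ω → α → ℝ}
    (hg : ∀ i ∈ s, UnifBoundedMeasurable (g i)) :
    UnifBoundedMeasurable fun ω a => ∏ i ∈ s, g i ω a := by
  classical
  induction s using Finset.induction_on with
  | empty => simpa using const 1
  | insert i s hi ih =>
    simp_rw [Finset.prod_insert hi]
    exact (hg i (mem_insert_self i s)).mul (ih fun j hj => hg j (mem_insert_of_mem hj))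

theorem sum_mul_prod_erase {ι : Type*} [Fintype ι] [DecidableEq ι] {f f' : ι → Ω → α → ℝ}
    (hf : ∀ i, UnifBoundedMeasurable (f i)) (hf' : ∀ i, UnifBoundedMeasurable (f' i)) :
    UnifBoundedMeasurable fun ω a => ∑ i, f' i ω a * ∏ j ∈ univ.erase i, f j ω a :=
  .finset_sum univ fun i _ => (hf' i).mul (.finset_prod _ fun j _ => hf j)

theorem sum_mul_prod_erase_add_sum {ι : Type*} [Fintype ι] [DecidableEq ι]
    {f f' f'' : ι → Ω → α → ℝ} (hf : ∀ i, UnifBoundedMeasurable (f i))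
    (hf' : ∀ i, UnifBoundedMeasurable (f' i)) (hf'' : ∀ i, UnifBoundedMeasurable (f'' i)) :
    UnifBoundedMeasurable fun ω a => ∑ i, (f'' i ω a * ∏ j ∈ univ.erase i, f j ω a
      + ∑ j ∈ univ.erase i, f' i ω a * f' j ω a * ∏ k ∈ (univ.erase i).erase j, f k ω a) :=
  .finset_sum univ fun i _ => ((hf'' i).mul (.finset_prod _ fun j _ => hf j)).add
    (.finset_sum _ fun j _ => ((hf' i).mul (hf' j)).mul (.finset_prod _ fun k _ => hf k))

variable {P : Measure Ω} [IsFiniteMeasure P]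

theorem integrable (hg : UnifBoundedMeasurable g) (a : α) : Integrable (g · a) P := by
  obtain ⟨hgm, C, hC⟩ := hg
  exact .of_bound (hgm a).aestronglyMeasurable C (.of_forall fun ω => hC ω a)

theorem hasDerivAt_integral {g g' : Ω → ℝ → ℝ} (hg : UnifBoundedMeasurable g)
    (hg' : UnifBoundedMeasurable g') (hd : ∀ ω s, HasDerivAt (g ω) (g' ω s) s) (s : ℝ) :
    HasDerivAt (fun s => ∫ ω, g ω s ∂P) (∫ ω, g' ω s ∂P) s := by
  obtain ⟨hg'm, C, hC⟩ := hg'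
  exact (hasDerivAt_integral_of_dominated_loc_of_deriv_le (bound := fun _ => C) Filter.univ_mem
    (.of_forall fun s => (hg.1 s).aestronglyMeasurable) (hg.integrable s)
    (hg'm s).aestronglyMeasurable (.of_forall fun ω t _ => hC ω t) (integrable_const C)
    (.of_forall fun ω t _ => hd ω t)).2

end UnifBoundedMeasurable

end UniformlyBounded

section RandomField

variable {Ω : Type*} [MeasurableSpace Ω] {P : Measure Ω} {ξ : Ω → ℝ × ℝ → ℝ} {M : ℝ}

theorem unifBoundedMeasurable_conv {α : Type*} (hmeas : Measurable (Function.uncurry ξ))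
    (hbd : ∀ ω z, |ξ ω z| ≤ M) {Q : ℝ × ℝ → ℝ} (hQ : Continuous Q) (hQs : HasCompactSupport Q)
    (γ : α → ℝ × ℝ) : UnifBoundedMeasurable fun ω a => conv Q (ξ ω) (γ a) := by
  refine ⟨fun a => ?_, (∫ z, |Q z|) * M, fun ω a => ?_⟩
  · exact ((hQ.measurable.comp (measurable_const.sub measurable_snd)).mul
      hmeas).stronglyMeasurable.integral_prod_right'.measurable
  · exact abs_conv_le (hQ.integrable_of_hasCompactSupport hQs)
      hmeas.of_uncurry_left.aestronglyMeasurable (hbd ω) (γ a)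

theorem integral_prod_integral_mul_eq_integral_pi {Z ι : Type*} [MeasurableSpace Z] {μ : Measure Z}
    [SigmaFinite μ] [Fintype ι] [IsFiniteMeasure P] {η : Ω → Z → ℝ}
    (hη : Measurable (Function.uncurry η)) (hbd : ∀ ω z, |η ω z| ≤ M) {g : ι → Z → ℝ}
    (hg : ∀ i, Integrable (g i) μ) :
    ∫ ω, ∏ i, (∫ z, g i z * η ω z ∂μ) ∂P
      = ∫ z, (∏ i, g i (z i)) * ∫ ω, ∏ i, η ω (z i) ∂P ∂Measure.pi fun _ => μ := by
  have hint : Integrable (fun p : Ω × (ι → Z) => (∏ i, g i (p.2 i)) * ∏ i, η p.1 (p.2 i))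
      (P.prod (Measure.pi fun _ => μ)) := by
    refine ((Integrable.fintype_prod hg).comp_snd P).mul_bdd (c := M ^ Fintype.card ι) ?_
      (.of_forall fun p => ?_)
    · refine (Finset.measurable_prod _ fun i _ => ?_).aestronglyMeasurable
      exact hη.comp (measurable_fst.prodMk ((measurable_pi_apply i).comp measurable_snd))
    · rw [Real.norm_eq_abs, Finset.abs_prod, ← Finset.card_univ, ← Finset.prod_const]
      exact Finset.prod_le_prod (fun _ _ => abs_nonneg _) fun i _ => hbd _ _
  calc ∫ ω, ∏ i, (∫ z, g i z * η ω z ∂μ) ∂P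
      = ∫ ω, ∫ z, (∏ i, g i (z i)) * ∏ i, η ω (z i) ∂Measure.pi (fun _ => μ) ∂P := by
        refine integral_congr_ae (.of_forall fun ω => ?_)
        simp only [← integral_fintype_prod_eq_prod (fun i z => g i z * η ω z),
          Finset.prod_mul_distrib]
    _ = ∫ z, ∫ ω, (∏ i, g i (z i)) * ∏ i, η ω (z i) ∂P ∂Measure.pi fun _ => μ :=
        integral_integral_swap hint
    _ = _ := by simp_rw [integral_const_mul]

theorem conv_add_eq_integral (Q f : ℝ × ℝ → ℝ) (y h : ℝ × ℝ) :
    conv Q f (y + h) = ∫ z, Q (y - z) * f (z + h) := by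
  rw [conv, ← integral_add_right_eq_self _ h]
  simp_rw [add_sub_add_right_eq_sub]

theorem integral_prod_conv_add_eq {ι : Type*} [Fintype ι] [IsFiniteMeasure P]
    (hmeas : Measurable (Function.uncurry ξ)) (hbd : ∀ ω z, |ξ ω z| ≤ M)
    (hstat : ∀ (h : ℝ × ℝ) (z : ι → ℝ × ℝ),
      (∫ ω, ∏ i, ξ ω (z i + h) ∂P) = ∫ ω, ∏ i, ξ ω (z i) ∂P)
    {q : ι → ℝ × ℝ → ℝ} (hq : ∀ i, Integrable (q i)) (y : ι → ℝ × ℝ) (h : ℝ × ℝ) :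
    ∫ ω, ∏ i, conv (q i) (ξ ω) (y i + h) ∂P = ∫ ω, ∏ i, conv (q i) (ξ ω) (y i) ∂P := by
  have hshift : Measurable (Function.uncurry fun ω z => ξ ω (z + h)) :=
    hmeas.comp (measurable_fst.prodMk (measurable_snd.add_const h))
  have hg : ∀ i, Integrable fun z => q i (y i - z) := fun i => (hq i).comp_sub_left (y i)
  simp_rw [conv_add_eq_integral,
    integral_prod_integral_mul_eq_integral_pi hshift (fun ω z => hbd ω _) hg, hstat]
  exact (integral_prod_integral_mul_eq_integral_pi hmeas hbd hg).symm

end RandomField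

section Derivatives

variable {Ω : Type*} [MeasurableSpace Ω] {P : Measure Ω} [IsFiniteMeasure P]
  {ξ : Ω → ℝ × ℝ → ℝ} {M : ℝ} {ι : Type*} [Fintype ι] [DecidableEq ι]
  {K : ι → ℝ × ℝ → ℝ} {Y : Ω → ℝ}

theorem hasDerivAt_integral_mul_prod_conv (hmeas : Measurable (Function.uncurry ξ))
    (hbd : ∀ ω z, |ξ ω z| ≤ M) (hK : ∀ i, ContDiff ℝ 1 (K i))
    (hKs : ∀ i, HasCompactSupport (K i)) (hY : UnifBoundedMeasurable fun ω (_ : ℝ) => Y ω)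
    (y v : ℝ × ℝ) (s : ℝ) :
    HasDerivAt (fun s => ∫ ω, Y ω * ∏ i, conv (K i) (ξ ω) (y + s • v) ∂P)
      (∫ ω, Y ω * ∑ i, conv (fderiv ℝ (K i) · v) (ξ ω) (y + s • v)
        * ∏ j ∈ univ.erase i, conv (K j) (ξ ω) (y + s • v) ∂P) s := by
  have hc := fun Q (hQ : Continuous Q) hQs =>
    unifBoundedMeasurable_conv hmeas hbd hQ hQs fun s : ℝ => y + s • v
  refine UnifBoundedMeasurable.hasDerivAt_integral
    (hY.mul (.finset_prod univ fun i _ => hc _ (hK i).continuous (hKs i)))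
    (hY.mul (.sum_mul_prod_erase (fun i => hc _ (hK i).continuous (hKs i))
      fun i => hc _ ((hK i).continuous_fderiv_apply_const v) ((hKs i).fderiv_apply ℝ v)))
    (fun ω s => ?_) s
  have hf := locallyIntegrable_of_abs_le hmeas.of_uncurry_left.aestronglyMeasurable (hbd ω)
  simpa [mul_comm] using (HasDerivAt.fun_finsetProd fun i _ =>
    hasDerivAt_conv_add_smul (hK i) (hKs i) hf y v s).const_mul (Y ω)

theorem hasDerivAt_integral_mul_sum_prod_conv (hmeas : Measurable (Function.uncurry ξ))
    (hbd : ∀ ω z, |ξ ω z| ≤ M) (hK : ∀ i, ContDiff ℝ 2 (K i))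
    (hKs : ∀ i, HasCompactSupport (K i)) (hY : UnifBoundedMeasurable fun ω (_ : ℝ) => Y ω)
    (y v : ℝ × ℝ) (s : ℝ) :
    HasDerivAt (fun s => ∫ ω, Y ω * ∑ i, conv (fderiv ℝ (K i) · v) (ξ ω) (y + s • v)
        * ∏ j ∈ univ.erase i, conv (K j) (ξ ω) (y + s • v) ∂P)
      (∫ ω, Y ω * ∑ i, (conv (fderiv ℝ (fderiv ℝ (K i) · v) · v) (ξ ω) (y + s • v)
          * ∏ j ∈ univ.erase i, conv (K j) (ξ ω) (y + s • v)
        + ∑ j ∈ univ.erase i, conv (fderiv ℝ (K i) · v) (ξ ω) (y + s • v)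
          * conv (fderiv ℝ (K j) · v) (ξ ω) (y + s • v)
          * ∏ k ∈ (univ.erase i).erase j, conv (K k) (ξ ω) (y + s • v)) ∂P) s := by
  have hK' : ∀ i, ContDiff ℝ 1 (fderiv ℝ (K i) · v) :=
    fun i => (hK i).fderiv_apply_const (by norm_num) v
  have hK's : ∀ i, HasCompactSupport (fderiv ℝ (K i) · v) := fun i => (hKs i).fderiv_apply ℝ v
  have hc := fun Q (hQ : Continuous Q) hQs =>
    unifBoundedMeasurable_conv hmeas hbd hQ hQs fun s : ℝ => y + s • v
  have hcK := fun i => hc _ (hK i).continuous (hKs i)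
  have hcK' := fun i => hc _ (hK' i).continuous (hK's i)
  refine UnifBoundedMeasurable.hasDerivAt_integral (hY.mul (.sum_mul_prod_erase hcK hcK'))
    (hY.mul (.sum_mul_prod_erase_add_sum hcK hcK' fun i =>
      hc _ ((hK' i).continuous_fderiv_apply_const v) ((hK's i).fderiv_apply ℝ v)))
    (fun ω s => ?_) s
  have hf := locallyIntegrable_of_abs_le hmeas.of_uncurry_left.aestronglyMeasurable (hbd ω)
  exact (HasDerivAt.sum_mul_prod_erase univ
    (fun i _ => hasDerivAt_conv_add_smul (hK i |>.of_le one_le_two) (hKs i) hf y v s)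
    (fun i _ => hasDerivAt_conv_add_smul (hK' i) (hK's i) hf y v s)).const_mul (Y ω)

theorem hasDerivAt_integral_conv_rev_sub_mul (hmeas : Measurable (Function.uncurry ξ))
    (hbd : ∀ ω z, |ξ ω z| ≤ M) {Q : ℝ × ℝ → ℝ} (hQ : ContDiff ℝ 1 Q) (hQs : HasCompactSupport Q)
    (hY : UnifBoundedMeasurable fun ω (_ : ℝ) => Y ω) (y v : ℝ × ℝ) (s : ℝ) :
    HasDerivAt (fun s => ∫ ω, conv (rev Q) (ξ ω) (y - s • v) * Y ω ∂P)
      (∫ ω, conv (rev (fderiv ℝ Q · v)) (ξ ω) (y - s • v) * Y ω ∂P) s := by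
  have hc := fun Q (hQ : Continuous Q) hQs =>
    unifBoundedMeasurable_conv hmeas hbd hQ hQs fun s : ℝ => y - s • v
  exact UnifBoundedMeasurable.hasDerivAt_integral
    ((hc _ hQ.continuous.rev hQs.rev).mul hY)
    ((hc _ (hQ.continuous_fderiv_apply_const v).rev
      (hQs.fderiv_apply ℝ v).rev).mul hY)
    (fun ω s => (hasDerivAt_conv_rev_sub_smul hQ hQs
      (locallyIntegrable_of_abs_le hmeas.of_uncurry_left.aestronglyMeasurable (hbd ω))
      y v s).mul_const (Y ω)) s

end Derivatives

section Stationary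

variable {Ω : Type*} [MeasurableSpace Ω] {P : Measure Ω} [IsFiniteMeasure P]
  {ξ : Ω → ℝ × ℝ → ℝ} {M : ℝ} {n : ℕ} {K₀ : ℝ × ℝ → ℝ} {K : Fin n → ℝ × ℝ → ℝ}

theorem integral_conv_rev_mul_prod_conv_add_eq (hmeas : Measurable (Function.uncurry ξ))
    (hbd : ∀ ω z, |ξ ω z| ≤ M)
    (hstat : ∀ (h : ℝ × ℝ) (z : Fin (n + 1) → ℝ × ℝ),
      (∫ ω, ∏ i, ξ ω (z i + h) ∂P) = ∫ ω, ∏ i, ξ ω (z i) ∂P)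
    (hK₀ : Integrable K₀) (hK : ∀ i, Integrable (K i)) (w h : ℝ × ℝ) :
    ∫ ω, conv (rev K₀) (ξ ω) w * ∏ k, conv (K k) (ξ ω) (w + h) ∂P
      = ∫ ω, conv (rev K₀) (ξ ω) (w - h) * ∏ k, conv (K k) (ξ ω) w ∂P := by
  have hq : ∀ i, Integrable ((Fin.cons (rev K₀) K : Fin (n + 1) → ℝ × ℝ → ℝ) i) :=
    Fin.cases hK₀.comp_neg hK
  simpa [Fin.prod_univ_succ] using
    integral_prod_conv_add_eq hmeas hbd hstat hq (Fin.cons (w - h) fun _ => w) h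

theorem integral_conv_rev_mul_sum_prod_conv_fderiv_add_smul_eq
    (hmeas : Measurable (Function.uncurry ξ)) (hbd : ∀ ω z, |ξ ω z| ≤ M)
    (hstat : ∀ (h : ℝ × ℝ) (z : Fin (n + 1) → ℝ × ℝ),
      (∫ ω, ∏ i, ξ ω (z i + h) ∂P) = ∫ ω, ∏ i, ξ ω (z i) ∂P)
    (hK₀ : ContDiff ℝ 1 K₀) (hK₀s : HasCompactSupport K₀) (hK : ∀ i, ContDiff ℝ 1 (K i))
    (hKs : ∀ i, HasCompactSupport (K i)) (w v : ℝ × ℝ) (s : ℝ) :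
    ∫ ω, conv (rev K₀) (ξ ω) w * ∑ i, conv (fderiv ℝ (K i) · v) (ξ ω) (w + s • v)
        * ∏ j ∈ univ.erase i, conv (K j) (ξ ω) (w + s • v) ∂P
      = ∫ ω, conv (rev (fderiv ℝ K₀ · v)) (ξ ω) (w - s • v) * ∏ k, conv (K k) (ξ ω) w ∂P := by
  have hc := fun Q (hQ : Continuous Q) hQs =>
    unifBoundedMeasurable_conv (α := ℝ) hmeas hbd hQ hQs fun _ => w
  have hF := hasDerivAt_integral_mul_prod_conv (P := P) hmeas hbd hK hKs
    (hc _ hK₀.continuous.rev hK₀s.rev) w v s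
  have hG := hasDerivAt_integral_conv_rev_sub_mul (P := P) hmeas hbd hK₀ hK₀s
    (.finset_prod univ fun k _ => hc _ (hK k).continuous (hKs k)) w v s
  have hFG := funext fun s : ℝ => integral_conv_rev_mul_prod_conv_add_eq hmeas hbd hstat
    (hK₀.continuous.integrable_of_hasCompactSupport hK₀s)
    (fun k => (hK k).continuous.integrable_of_hasCompactSupport (hKs k)) w (s • v)
  rw [← hFG] at hG
  exact hF.unique hG

theorem integral_conv_rev_mul_sum_prod_conv_fderiv_fderiv_eq
    (hmeas : Measurable (Function.uncurry ξ)) (hbd : ∀ ω z, |ξ ω z| ≤ M)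
    (hstat : ∀ (h : ℝ × ℝ) (z : Fin (n + 1) → ℝ × ℝ),
      (∫ ω, ∏ i, ξ ω (z i + h) ∂P) = ∫ ω, ∏ i, ξ ω (z i) ∂P)
    (hK₀ : ContDiff ℝ 2 K₀) (hK₀s : HasCompactSupport K₀) (hK : ∀ i, ContDiff ℝ 2 (K i))
    (hKs : ∀ i, HasCompactSupport (K i)) (w v : ℝ × ℝ) :
    ∫ ω, conv (rev K₀) (ξ ω) w * ∑ i, (conv (fderiv ℝ (fderiv ℝ (K i) · v) · v) (ξ ω) w
          * ∏ j ∈ univ.erase i, conv (K j) (ξ ω) w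
        + ∑ j ∈ univ.erase i, conv (fderiv ℝ (K i) · v) (ξ ω) w
          * conv (fderiv ℝ (K j) · v) (ξ ω) w
          * ∏ k ∈ (univ.erase i).erase j, conv (K k) (ξ ω) w) ∂P
      = ∫ ω, conv (rev (fderiv ℝ (fderiv ℝ K₀ · v) · v)) (ξ ω) w
          * ∏ k, conv (K k) (ξ ω) w ∂P := by
  have hc := fun Q (hQ : Continuous Q) hQs =>
    unifBoundedMeasurable_conv (α := ℝ) hmeas hbd hQ hQs fun _ => w
  have hF := hasDerivAt_integral_mul_sum_prod_conv (P := P) hmeas hbd hK hKs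
    (hc _ hK₀.continuous.rev hK₀s.rev) w v 0
  have hG := hasDerivAt_integral_conv_rev_sub_mul (P := P) hmeas hbd
    (hK₀.fderiv_apply_const (by norm_num) v) (hK₀s.fderiv_apply ℝ v)
    (.finset_prod univ fun k _ => hc _ (hK k).continuous (hKs k)) w v 0
  have hFG := funext <| integral_conv_rev_mul_sum_prod_conv_fderiv_add_smul_eq hmeas hbd hstat
    (hK₀.of_le one_le_two) hK₀s (fun i => (hK i).of_le one_le_two) hKs w v
  rw [← hFG] at hG
  simpa using hF.unique hG

theorem integral_conv_rev_mul_parabolic_eq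
    (hmeas : Measurable (Function.uncurry ξ)) (hbd : ∀ ω z, |ξ ω z| ≤ M)
    (hstat : ∀ (h : ℝ × ℝ) (z : Fin (n + 1) → ℝ × ℝ),
      (∫ ω, ∏ i, ξ ω (z i + h) ∂P) = ∫ ω, ∏ i, ξ ω (z i) ∂P)
    (hK₀ : ContDiff ℝ 2 K₀) (hK₀s : HasCompactSupport K₀) (hK : ∀ i, ContDiff ℝ 2 (K i))
    (hKs : ∀ i, HasCompactSupport (K i)) (c : ℝ) (w vt vx : ℝ × ℝ) :
    ∫ ω, conv (rev K₀) (ξ ω) w * (∑ i, conv (fderiv ℝ (K i) · vt) (ξ ω) w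
          * ∏ j ∈ univ.erase i, conv (K j) (ξ ω) w
        - c * ∑ i, (conv (fderiv ℝ (fderiv ℝ (K i) · vx) · vx) (ξ ω) w
          * ∏ j ∈ univ.erase i, conv (K j) (ξ ω) w
        + ∑ j ∈ univ.erase i, conv (fderiv ℝ (K i) · vx) (ξ ω) w
          * conv (fderiv ℝ (K j) · vx) (ξ ω) w
          * ∏ k ∈ (univ.erase i).erase j, conv (K k) (ξ ω) w)) ∂P
      = ∫ ω, (conv (rev (fderiv ℝ K₀ · vt)) (ξ ω) w
          - c * conv (rev (fderiv ℝ (fderiv ℝ K₀ · vx) · vx)) (ξ ω) w)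
          * ∏ k, conv (K k) (ξ ω) w ∂P := by
  have hK1 : ∀ i, ContDiff ℝ 1 (K i) := fun i => (hK i).of_le one_le_two
  have htime := integral_conv_rev_mul_sum_prod_conv_fderiv_add_smul_eq hmeas hbd hstat
    (hK₀.of_le one_le_two) hK₀s hK1 hKs w vt 0
  simp only [zero_smul, add_zero, sub_zero] at htime
  have hspace := integral_conv_rev_mul_sum_prod_conv_fderiv_fderiv_eq hmeas hbd hstat
    hK₀ hK₀s hK hKs w vx
  have hc := fun Q (hQ : Continuous Q) hQs =>
    unifBoundedMeasurable_conv (α := ℝ) hmeas hbd hQ hQs fun _ => w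
  have hK' : ∀ i, ContDiff ℝ 1 (fderiv ℝ (K i) · vx) :=
    fun i => (hK i).fderiv_apply_const (by norm_num) vx
  have hK's : ∀ i, HasCompactSupport (fderiv ℝ (K i) · vx) := fun i => (hKs i).fderiv_apply ℝ vx
  have hcK := fun i => hc _ (hK i).continuous (hKs i)
  have hA := hc _ hK₀.continuous.rev hK₀s.rev
  have hT := hA.mul (.sum_mul_prod_erase hcK fun i =>
    hc _ ((hK1 i).continuous_fderiv_apply_const vt) ((hKs i).fderiv_apply ℝ vt))
  have hX := hA.mul (.sum_mul_prod_erase_add_sum hcK (fun i => hc _ (hK' i).continuous (hK's i))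
    fun i => hc _ ((hK' i).continuous_fderiv_apply_const vx) ((hK's i).fderiv_apply ℝ vx))
  have hprod := UnifBoundedMeasurable.finset_prod univ fun k _ => hcK k
  have hK₀' : ContDiff ℝ 1 (fderiv ℝ K₀ · vx) := hK₀.fderiv_apply_const (by norm_num) vx
  have hR₁ := (hc _ ((hK₀.of_le one_le_two).continuous_fderiv_apply_const vt).rev
    (hK₀s.fderiv_apply ℝ vt).rev).mul hprod
  have hR₂ := (hc _ (hK₀'.continuous_fderiv_apply_const vx).rev
    ((hK₀s.fderiv_apply ℝ vx).fderiv_apply ℝ vx).rev).mul hprod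
  simp only [mul_sub, sub_mul, mul_left_comm _ c, mul_assoc c]
  rw [integral_sub (hT.integrable 0) ((hX.integrable 0).const_mul c),
    integral_sub (hR₁.integrable 0) ((hR₂.integrable 0).const_mul c),
    integral_const_mul, integral_const_mul, htime, hspace]

end Stationary

theorem stmt9_general (n : ℕ) (c : ℝ)
    {Ω : Type*} [MeasurableSpace Ω] (P : Measure Ω) [IsProbabilityMeasure P]
    (ξ : Ω → ℝ × ℝ → ℝ) (hmeas : Measurable (Function.uncurry ξ))
    (M : ℝ) (hbd : ∀ ω z, |ξ ω z| ≤ M)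
    (hstat : ∀ (h : ℝ × ℝ) (z : Fin (n + 1) → ℝ × ℝ),
      (∫ ω, ∏ i, ξ ω (z i + h) ∂P) = ∫ ω, ∏ i, ξ ω (z i) ∂P)
    (K₀ : ℝ × ℝ → ℝ) (K : Fin n → ℝ × ℝ → ℝ)
    (hK₀ : ContDiff ℝ 2 K₀) (hK₀supp : HasCompactSupport K₀)
    (hK : ∀ i, ContDiff ℝ 2 (K i)) (hKsupp : ∀ i, HasCompactSupport (K i)) :
    ∀ w : ℝ × ℝ,
      (∫ ω, conv (rev K₀) (ξ ω) w
          * ((∑ i, conv (Lop c (K i)) (ξ ω) w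
                * ∏ k ∈ univ.erase i, conv (K k) (ξ ω) w)
            - c * ∑ i, ∑ j ∈ univ.erase i,
                conv (px (K i)) (ξ ω) w * conv (px (K j)) (ξ ω) w
                  * ∏ k ∈ (univ.erase i).erase j, conv (K k) (ξ ω) w) ∂P)
      = ∫ ω, conv (rev (Lop c K₀)) (ξ ω) w * ∏ k, conv (K k) (ξ ω) w ∂P := by
  intro w
  have hf : ∀ ω, AEStronglyMeasurable (ξ ω) := fun ω => hmeas.of_uncurry_left.aestronglyMeasurable
  have key := integral_conv_rev_mul_parabolic_eq hmeas hbd hstat hK₀ hK₀supp hK hKsupp c w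
    (1, 0) (0, 1)
  refine (integral_congr_ae (.of_forall fun ω => ?_)).trans
    (key.trans (integral_congr_ae (.of_forall fun ω => ?_)))
  · simp only [conv_Lop (hK _) (hKsupp _) (hf ω) (hbd ω), sub_mul, sum_sub_distrib, mul_assoc,
      ← mul_sum, sum_add_distrib]
    -- `ring!` unfolds `pt` and `px` to the directional derivatives appearing in `key`
    ring!
  · simp only [conv_rev_Lop hK₀ hK₀supp (hf ω) (hbd ω)]
    rfl

theorem stmt9 (n : ℕ) (hn : 1 ≤ n) (c : ℝ)
    {Ω : Type*} [MeasurableSpace Ω] (P : Measure Ω) [IsProbabilityMeasure P]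
    (ξ : Ω → ℝ × ℝ → ℝ) (hmeas : Measurable (Function.uncurry ξ))
    (hcont : ∀ ω, Continuous (ξ ω))
    (M : ℝ) (hbd : ∀ ω z, |ξ ω z| ≤ M)
    (hstat : ∀ (h : ℝ × ℝ) (z : Fin (n + 1) → ℝ × ℝ),
      (∫ ω, ∏ i, ξ ω (z i + h) ∂P) = ∫ ω, ∏ i, ξ ω (z i) ∂P)
    (K₀ : ℝ × ℝ → ℝ) (K : Fin n → ℝ × ℝ → ℝ)
    (hK₀ : ContDiff ℝ 2 K₀) (hK₀supp : HasCompactSupport K₀)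
    (hK : ∀ i, ContDiff ℝ 2 (K i)) (hKsupp : ∀ i, HasCompactSupport (K i)) :
    ∀ w : ℝ × ℝ,
      (∫ ω, conv (rev K₀) (ξ ω) w
          * ((∑ i, conv (Lop c (K i)) (ξ ω) w
                * ∏ k ∈ univ.erase i, conv (K k) (ξ ω) w)
            - c * ∑ i, ∑ j ∈ univ.erase i,
                conv (px (K i)) (ξ ω) w * conv (px (K j)) (ξ ω) w
                  * ∏ k ∈ (univ.erase i).erase j, conv (K k) (ξ ω) w) ∂P)
      = ∫ ω, conv (rev (Lop c K₀)) (ξ ω) w * ∏ k, conv (K k) (ξ ω) w ∂P :=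
  stmt9_general n c P ξ hmeas M hbd hstat K₀ K hK₀ hK₀supp hK hKsupp
end
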